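/- Let 1 ≤ d ≤ 6. Every saturated Borel ideal I ⊆ K[x_0,x_1,x_2] whose Hilbert polynomial is the constant polynomial d is a hilb-segment ideal with respect to some term order; that is, there exists a term order ≺ such that I ∩ 𝕋_d is a segment with respect to ≺ (here d is the Gotzmann number of the constant polynomial d). -/

import Mathlib

open Polynomial

/-- Exponent vectors of monomials (terms) of `S = K[x_0, …, x_n]`. -/
abbrev Expo (n : ℕ) := Fin (n + 1) → ℕ

/-- The degree of a term. -/
def deg {n : ℕ} (α : Expo n) : ℕ := ∑ i, α i

/-- The exponent vector of the variable `x_i`. -/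
def sing {n : ℕ} (i : Fin (n + 1)) : Expo n := Pi.single i 1

/-- `MoveDown α β` : the term `α` is obtained from `β` by an elementary move `e_j^-`,
i.e. `α = x_{j-1}·β/x_j` for some `j ≥ 1` with `β_j > 0`. -/
def MoveDown {n : ℕ} (α β : Expo n) : Prop :=
  ∃ j k : Fin (n + 1), (k : ℕ) + 1 = (j : ℕ) ∧ α + sing j = β + sing k

/-- The Borel (partial) order `α <_B β` : transitive closure of elementary moves `e_j^-`. -/
def BorelLt {n : ℕ} (α β : Expo n) : Prop := Relation.TransGen MoveDown α β

/-- A Borel set: a set of terms closed upwards under the Borel order. -/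
def IsBorelSet {n : ℕ} (B : Set (Expo n)) : Prop :=
  ∀ α β : Expo n, α ∈ B → MoveDown α β → β ∈ B

/-- A monomial ideal, identified with its set of terms: closed under multiplication
by arbitrary terms. -/
def IsMonIdeal {n : ℕ} (M : Set (Expo n)) : Prop :=
  ∀ α ∈ M, ∀ γ : Expo n, α + γ ∈ M

/-- A Borel ideal: a monomial ideal which is a Borel set in every degree. -/
def IsBorelIdeal {n : ℕ} (M : Set (Expo n)) : Prop :=
  IsMonIdeal M ∧ IsBorelSet M

/-- `𝒩(M)_t` : the set of degree-`t` terms not lying in `M`. -/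
def coIdeal {n : ℕ} (M : Set (Expo n)) (t : ℕ) : Set (Expo n) :=
  {α | deg α = t ∧ α ∉ M}

/-- `p` is the Hilbert polynomial of `S/M` : `|𝒩(M)_t| = p(t)` for all `t` large. -/
def HasHilbPoly {n : ℕ} (M : Set (Expo n)) (p : Polynomial ℚ) : Prop :=
  ∃ N : ℕ, ∀ t : ℕ, N ≤ t → ((coIdeal M t).ncard : ℚ) = p.eval (t : ℚ)

/-- Saturation for monomial ideals: a term `α` with `x_i^{k_i}·α ∈ M` for suitable
powers of every variable already lies in `M`. -/
def IsSaturatedIdeal {n : ℕ} (M : Set (Expo n)) : Prop :=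
  ∀ α : Expo n, (∀ i : Fin (n + 1), ∃ k : ℕ, α + k • sing i ∈ M) → α ∈ M

/-- A term order on the terms of `S`: a multiplicative (strict) total order with `1`
as least element and `x_0 ≺ x_1 ≺ … ≺ x_n`. -/
structure TermOrder (n : ℕ) where
  lt : Expo n → Expo n → Prop
  irrefl : ∀ a : Expo n, ¬ lt a a
  trans : ∀ a b c : Expo n, lt a b → lt b c → lt a c
  total : ∀ a b : Expo n, a ≠ b → lt a b ∨ lt b a
  add_right : ∀ a b c : Expo n, lt a b → lt (a + c) (b + c)
  zero_lt : ∀ a : Expo n, a ≠ 0 → lt 0 a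
  var_lt : ∀ i j : Fin (n + 1), i < j → lt (sing i) (sing j)

/-- `M ∩ 𝕋_t` is a segment w.r.t. the order `lt`. -/
def IsSegmentAt {n : ℕ} (lt : Expo n → Expo n → Prop) (M : Set (Expo n)) (t : ℕ) : Prop :=
  ∀ τ σ : Expo n, τ ∈ M → deg τ = t → deg σ = t → lt τ σ → σ ∈ M

/-- `M` is a segment ideal w.r.t. the order `lt`. -/
def IsSegmentIdeal {n : ℕ} (lt : Expo n → Expo n → Prop) (M : Set (Expo n)) : Prop :=
  ∀ t : ℕ, IsSegmentAt lt M t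

/-- `α` is a minimal monomial generator of the monomial ideal `M`. -/
def IsMinGen {n : ℕ} (M : Set (Expo n)) (α : Expo n) : Prop :=
  α ∈ M ∧ ∀ β γ : Expo n, β + γ = α → β ∈ M → γ = 0

/-- The ideal generated by the elements of `M` of degree `≤ s - 1`. -/
def genBelow {n : ℕ} (M : Set (Expo n)) (s : ℕ) : Set (Expo n) :=
  {x | ∃ α γ : Expo n, α ∈ M ∧ deg α < s ∧ x = α + γ}

/-- `M` is a gen-segment ideal w.r.t. `lt`: for every `s` the minimal generators of
degree `s` are the greatest among the degree-`s` terms not in `⟨M_{≤ s-1}⟩`. -/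
def IsGenSegment {n : ℕ} (lt : Expo n → Expo n → Prop) (M : Set (Expo n)) : Prop :=
  ∀ α : Expo n, IsMinGen M α → ∀ σ : Expo n, deg σ = deg α →
    σ ∉ genBelow M (deg α) → ¬ IsMinGen M σ → lt σ α

/-- `δ` is the maximal degree of a minimal monomial generator of `M`. -/
def IsMaxGenDeg {n : ℕ} (M : Set (Expo n)) (δ : ℕ) : Prop :=
  (∃ α : Expo n, IsMinGen M α ∧ deg α = δ) ∧ ∀ α : Expo n, IsMinGen M α → deg α ≤ δ

/-- `p` is an admissible polynomial with Gotzmann decomposition of length `r`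
(so `r` is its Gotzmann number):
`p(z) = ∑_{i=1}^{r} binom(z + a_i - (i-1), a_i)` with `a_1 ≥ … ≥ a_r ≥ 0`. -/
def IsGotzmannDecomp (p : Polynomial ℚ) (r : ℕ) : Prop :=
  ∃ a : Fin r → ℕ, Antitone a ∧
    ∀ t : ℕ, r ≤ t →
      p.eval (t : ℚ) = ∑ i : Fin r, ((t + a i - (i : ℕ)).choose (a i) : ℚ)

/-- An admissible polynomial: one admitting a Gotzmann decomposition. -/
def IsAdmissible (p : Polynomial ℚ) : Prop := ∃ r : ℕ, IsGotzmannDecomp p r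

/-- Setting `x_0 = x_1 = 1` in a term. -/
def trunc01 {n : ℕ} (α : Expo n) : Expo n := fun i => if (i : ℕ) ≤ 1 then 0 else α i

/-- The `x_1`-saturation of a monomial ideal: the ideal generated by the minimal
generators with `x_0 = x_1 = 1`. -/
def xOneSat {n : ℕ} (M : Set (Expo n)) : Set (Expo n) :=
  {x | ∃ α γ : Expo n, IsMinGen M α ∧ x = trunc01 α + γ}

/-- The lexicographic comparison (intended for terms of equal degree):
`α ≺_lex β` iff `α_k < β_k` at the largest index `k` where they differ. -/
def LexLt {n : ℕ} (α β : Expo n) : Prop :=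
  ∃ k : Fin (n + 1), α k < β k ∧ ∀ j : Fin (n + 1), k < j → α j = β j

/-- The reverse lexicographic comparison (intended for terms of equal degree):
`α ≺_revlex β` iff `α_h > β_h` at the smallest index `h` where they differ. -/
def RevLexLt {n : ℕ} (α β : Expo n) : Prop :=
  ∃ h : Fin (n + 1), β h < α h ∧ ∀ j : Fin (n + 1), j < h → α j = β j

/-- A graded term order. -/
def IsGraded {n : ℕ} (ord : TermOrder n) : Prop :=
  ∀ α β : Expo n, deg α < deg β → ord.lt α β

/-- A reverse term order: a graded term order such that, on terms of equal degree,
a strictly larger exponent of `x_0` makes a term strictly smaller. -/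
def IsReverseOrder {n : ℕ} (ord : TermOrder n) : Prop :=
  IsGraded ord ∧ ∀ α β : Expo n, deg α = deg β → β 0 < α 0 → ord.lt α β

/-!
A saturated Borel ideal `I ⊆ K[x_0,x_1,x_2]` does not see `x_0`: `x^α ∈ I` iff
`x_1^{α_1} x_2^{α_2} ∈ I`. So `I` is a staircase in the `(x_1, x_2)`-plane, described by the column
heights `c_b = min {a | x_1^a x_2^b ∈ I}`. Borel-ness makes them strictly decrease until they
vanish, and they add up to the constant value `d` of the Hilbert function. For `d ≤ 6` the
nonzero heights therefore form a partition `(k)`, `(k, l)` or `(3, 2, 1)`, and each of these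
staircases is cut off from its complement by a line `u a + v b = L` with `0 < u < v`. The weight
order with weights `(1, 1 + u, 1 + v)`, refined lexicographically, is a term order, and on terms
of equal degree it compares `u α_1 + v α_2`, so `I` is a segment in every degree.
-/

open Matrix

lemma dotProduct_pos {n : ℕ} {w α : Expo n} (hw : ∀ i, 0 < w i) (hα : α ≠ 0) : 0 < w ⬝ᵥ α := by
  obtain ⟨i, hi⟩ := Function.ne_iff.mp hα
  exact (Nat.mul_pos (hw i) (Nat.pos_of_ne_zero hi)).trans_le
    (Finset.single_le_sum (f := fun j => w j * α j) (fun _ _ => Nat.zero_le _) (Finset.mem_univ i))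

namespace TermOrder

variable {n : ℕ}

def weightKey (w α : Expo n) : ℕ ×ₗ Lex (Expo n) := toLex (w ⬝ᵥ α, toLex α)

lemma weightKey_add (w α β : Expo n) :
    weightKey w (α + β) = weightKey w α + weightKey w β := by
  simp only [weightKey, dotProduct_add, toLex_add]; rfl

lemma weightKey_injective (w : Expo n) : Function.Injective (weightKey w) := fun _ _ h =>
  (by simpa [weightKey] using h : _ ∧ _).2

def ofWeight (w : Expo n) (hw0 : 0 < w 0) (hw : StrictMono w) : TermOrder n where
  lt α β := weightKey w α < weightKey w β
  irrefl _ := lt_irrefl _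
  trans _ _ _ := lt_trans
  total _ _ h := lt_or_gt_of_ne ((weightKey_injective w).ne h)
  add_right a b c h := by simpa only [weightKey_add] using add_lt_add_of_lt_of_le h le_rfl
  zero_lt a ha := by
    refine Prod.Lex.toLex_lt_toLex.mpr (Or.inl ?_)
    simpa using dotProduct_pos (fun i => hw0.trans_le (hw.monotone (Fin.zero_le i))) ha
  var_lt i j hij := Prod.Lex.toLex_lt_toLex.mpr (Or.inl (by simpa [sing] using hw hij))

lemma isSegmentAt_ofWeight {w : Expo n} {hw0 : 0 < w 0} {hw : StrictMono w}
    {M : Set (Expo n)} {t : ℕ}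
    (h : ∀ τ σ, τ ∈ M → σ ∉ M → deg τ = t → deg σ = t → w ⬝ᵥ σ < w ⬝ᵥ τ) :
    IsSegmentAt (ofWeight w hw0 hw).lt M t := by
  intro τ σ hτ hdτ hdσ hlt
  by_contra hσ
  exact (h τ σ hτ hσ hdτ hdσ).not_ge (Prod.Lex.monotone_fst _ _ hlt.le)

end TermOrder

section BorelIdeal

variable {n : ℕ} {I : Set (Expo n)}

lemma IsBorelSet.add_nsmul_sing_succ (hB : IsBorelSet I) (i : Fin n) (m : ℕ) {α : Expo n}
    (h : α + m • sing i.castSucc ∈ I) : α + m • sing i.succ ∈ I := by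
  induction m generalizing α with
  | zero => simpa using h
  | succ m ih =>
    have hmove : (α + sing i.succ) + m • sing i.castSucc ∈ I := by
      refine hB (α + m • sing i.castSucc + sing i.castSucc) _ (by rwa [succ_nsmul, ← add_assoc] at h)
        ⟨i.succ, i.castSucc, rfl, by abel⟩
    simpa only [succ_nsmul, add_assoc, add_comm (sing i.succ)] using ih hmove

lemma IsSaturatedIdeal.mem_of_add_nsmul_sing_zero (hsat : IsSaturatedIdeal I)
    (hB : IsBorelSet I) {α : Expo n} {m : ℕ} (h : α + m • sing 0 ∈ I) : α ∈ I :=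
  hsat α fun i => ⟨m, Fin.induction h (fun i ih => hB.add_nsmul_sing_succ i m ih) i⟩

lemma deg_add (α β : Expo n) : deg (α + β) = deg α + deg β :=
  Finset.sum_add_distrib

lemma deg_sing (i : Fin (n + 1)) : deg (sing i : Expo n) = 1 := by
  simp [deg, sing]

lemma finite_setOf_deg_eq (t : ℕ) : {α : Expo n | deg α = t}.Finite :=
  (Set.finite_Icc 0 fun _ => t).subset fun α hα =>
    ⟨fun _ => Nat.zero_le _, fun i => hα ▸ Finset.single_le_sum (fun j _ => Nat.zero_le (α j))
      (Finset.mem_univ i)⟩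

lemma coIdeal_finite (M : Set (Expo n)) (t : ℕ) : (coIdeal M t).Finite :=
  (finite_setOf_deg_eq t).subset fun _ hα => hα.1

lemma HasHilbPoly.ncard_coIdeal_eq {M : Set (Expo n)} {d : ℕ}
    (hp : HasHilbPoly M (C (d : ℚ))) : ∃ N, ∀ t, N ≤ t → (coIdeal M t).ncard = d := by
  obtain ⟨N, hN⟩ := hp
  refine ⟨N, fun t ht => ?_⟩
  have := hN t ht
  rw [eval_C] at this
  exact_mod_cast this

/-- Multiplication by `x_0` embeds `𝒩(I)_t` into `𝒩(I)_{t+1}`, missing the terms free of `x_0`. -/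
lemma ncard_coIdeal_lt_succ (hsat : IsSaturatedIdeal I) (hB : IsBorelSet I) {α : Expo n}
    {t : ℕ} (hα : α ∉ I) (hα0 : α 0 = 0) (hdeg : deg α = t + 1) :
    (coIdeal I t).ncard < (coIdeal I (t + 1)).ncard := by
  have hsub : insert α ((· + sing 0) '' coIdeal I t) ⊆ coIdeal I (t + 1) := by
    rintro _ (rfl | ⟨β, hβ, rfl⟩)
    · exact ⟨hdeg, hα⟩
    · exact ⟨by rw [deg_add, deg_sing, hβ.1],
        fun h => hβ.2 (hsat.mem_of_add_nsmul_sing_zero hB (m := 1) (by simpa using h))⟩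
  have hnotMem : α ∉ (· + sing 0) '' coIdeal I t := by
    rintro ⟨β, -, rfl⟩
    simp [sing] at hα0
  calc (coIdeal I t).ncard
      = ((· + sing 0) '' coIdeal I t).ncard :=
        (Set.ncard_image_of_injective _ (add_left_injective _)).symm
    _ < (insert α ((· + sing 0) '' coIdeal I t)).ncard :=
        by rw [Set.ncard_insert_of_notMem hnotMem ((coIdeal_finite I t).image _)]; omega
    _ ≤ (coIdeal I (t + 1)).ncard := Set.ncard_le_ncard hsub (coIdeal_finite I _)

lemma mem_of_ncard_coIdeal_eq (hsat : IsSaturatedIdeal I) (hB : IsBorelSet I) {N d : ℕ}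
    (hcount : ∀ t, N ≤ t → (coIdeal I t).ncard = d) {α : Expo n} (hα0 : α 0 = 0)
    (hdeg : N < deg α) : α ∈ I := by
  by_contra hα
  obtain ⟨t, ht⟩ : ∃ t, deg α = t + 1 := ⟨deg α - 1, by omega⟩
  have := ncard_coIdeal_lt_succ hsat hB hα hα0 ht
  rw [hcount t (by omega), hcount (t + 1) (by omega)] at this
  exact lt_irrefl _ this

end BorelIdeal

/-- By the convention `sInf ∅ = 0`, this is `0` when no `x_1^a x_2^b` lies in `I`. -/
noncomputable def colHeight (I : Set (Expo 2)) (b : ℕ) : ℕ := sInf {a | ![0, a, b] ∈ I}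

section Staircase

variable {I : Set (Expo 2)}

lemma eq_add_nsmul_sing_zero (α : Expo 2) : α = ![0, α 1, α 2] + α 0 • sing 0 := by
  funext i; fin_cases i <;> simp [sing]

lemma IsSaturatedIdeal.mem_iff (hsat : IsSaturatedIdeal I) (hB : IsBorelSet I)
    (hM : IsMonIdeal I) (α : Expo 2) : α ∈ I ↔ ![0, α 1, α 2] ∈ I := by
  conv_lhs => rw [eq_add_nsmul_sing_zero α]
  exact ⟨hsat.mem_of_add_nsmul_sing_zero hB, fun h => hM _ h _⟩

lemma mem_iff_colHeight_le (hM : IsMonIdeal I) {b : ℕ} (hb : ∃ a, ![0, a, b] ∈ I) (a : ℕ) :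
    ![0, a, b] ∈ I ↔ colHeight I b ≤ a := by
  refine ⟨fun h => Nat.sInf_le h, fun h => ?_⟩
  have hmem : ![0, colHeight I b, b] ∈ I := Nat.sInf_mem hb
  have e : ![0, colHeight I b, b] + ![0, a - colHeight I b, 0] = ![0, a, b] := by
    simp [Nat.add_sub_cancel' h]
  exact e ▸ hM _ hmem _

lemma colHeight_succ_lt (hB : IsBorelSet I) (hM : IsMonIdeal I)
    (hcol : ∀ b, ∃ a, ![0, a, b] ∈ I) {b : ℕ} (hpos : 0 < colHeight I (b + 1)) :
    colHeight I (b + 1) < colHeight I b := by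
  have hbelow : ![0, colHeight I (b + 1) - 1, b + 1] ∉ I := by
    rw [mem_iff_colHeight_le hM (hcol _)]; omega
  by_contra! hle
  refine hbelow (hB ![0, colHeight I (b + 1), b] _ ((mem_iff_colHeight_le hM (hcol _) _).2 hle)
    ⟨2, 1, rfl, ?_⟩)
  funext i; fin_cases i <;> simp [sing, Nat.sub_add_cancel hpos]

/-- For `t` large, the terms `x_0^{t-a-b} x_1^a x_2^b` with `a < colHeight I b` are distinct and
lie outside `I`. -/
lemma sum_colHeight_le (hsat : IsSaturatedIdeal I) (hB : IsBorelSet I) (hM : IsMonIdeal I)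
    (hcol : ∀ b, ∃ a, ![0, a, b] ∈ I) {N d : ℕ}
    (hcount : ∀ t, N ≤ t → (coIdeal I t).ncard = d) (m : ℕ) :
    ∑ b ∈ Finset.range m, colHeight I b ≤ d := by
  set t := N + ∑ b ∈ Finset.range m, colHeight I b + m
  let F := (Finset.range m).sigma fun b => Finset.range (colHeight I b)
  have hmaps : ∀ p ∈ (F : Set (Σ _ : ℕ, ℕ)), ![t - p.2 - p.1, p.2, p.1] ∈ coIdeal I t := by
    rintro ⟨b, a⟩ hp
    simp only [F, Finset.coe_sigma, Set.mem_sigma_iff, Finset.coe_range, Set.mem_Iio] at hp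
    have hle : colHeight I b ≤ ∑ b ∈ Finset.range m, colHeight I b :=
      Finset.single_le_sum (fun _ _ => Nat.zero_le _) (Finset.mem_range.2 hp.1)
    have hdeg : deg (![t - a - b, a, b] : Expo 2) = t := by
      simp only [deg, Nat.reduceAdd, Fin.sum_univ_three, cons_val_zero, cons_val_one, cons_val]
      omega
    refine ⟨hdeg, fun h => ?_⟩
    rw [hsat.mem_iff hB hM, mem_iff_colHeight_le hM (hcol _)] at h
    exact (by simpa using h : colHeight I b ≤ a).not_gt hp.2
  have hinj : Set.InjOn (fun p : Σ _ : ℕ, ℕ => ![t - p.2 - p.1, p.2, p.1]) F := by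
    rintro ⟨b, a⟩ - ⟨b', a'⟩ - h
    simp only [vecCons_inj] at h
    simp [h.2.1, h.2.2.1]
  calc ∑ b ∈ Finset.range m, colHeight I b = (F : Set (Σ _ : ℕ, ℕ)).ncard := by
        rw [Set.ncard_coe_finset, Finset.card_sigma]; simp
    _ ≤ (coIdeal I t).ncard := Set.ncard_le_ncard_of_injOn _ hmaps hinj (coIdeal_finite I t)
    _ = d := hcount t (by omega)

end Staircase

section Separation

variable {c : ℕ → ℕ}

lemma separates_of_corners {u v L m : ℕ} (hzero : ∀ b, m ≤ b → c b = 0)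
    (hin : ∀ b < m, u * (c b - 1) + v * b < L) (hout : ∀ b ≤ m, L ≤ u * c b + v * b)
    {a b a' b' : ℕ} (ha : a < c b) (ha' : c b' ≤ a') : u * a + v * b < u * a' + v * b' := by
  have hb : b < m := by
    by_contra! hb
    rw [hzero b hb] at ha
    omega
  have hlow : u * a + v * b < L :=
    lt_of_le_of_lt (by gcongr; omega) (hin b hb)
  have hhigh : L ≤ u * a' + v * b' := by
    rcases le_or_gt b' m with hb' | hb'
    · exact (hout b' hb').trans (by gcongr)
    · calc L ≤ u * c m + v * m := hout m le_rfl
        _ = v * m := by rw [hzero m le_rfl, mul_zero, zero_add]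
        _ ≤ u * a' + v * b' := le_add_left (by gcongr)
  omega

lemma eq_zero_of_le_of_eq_zero (hdec : ∀ b, 0 < c (b + 1) → c (b + 1) < c b) {m : ℕ}
    (hm : c m = 0) : ∀ b, m ≤ b → c b = 0 := by
  intro b hb
  induction b, hb using Nat.le_induction with
  | base => exact hm
  | succ b _ ih => by_contra h; have := hdec b (Nat.pos_of_ne_zero h); omega

lemma exists_separating_weights (hdec : ∀ b, 0 < c (b + 1) → c (b + 1) < c b)
    (hsum : c 0 + c 1 + c 2 + c 3 ≤ 6) :
    ∃ u v, 0 < u ∧ u < v ∧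
      ∀ a b a' b', a < c b → c b' ≤ a' → u * a + v * b < u * a' + v * b' := by
  have hstep : ∀ b, c (b + 1) = 0 ∨ c (b + 1) < c b :=
    fun b => (Nat.eq_zero_or_pos _).imp_right (hdec b)
  have h0 : c 1 = 0 ∨ c 1 < c 0 := hstep 0
  have h1 : c 2 = 0 ∨ c 2 < c 1 := hstep 1
  have h2 : c 3 = 0 ∨ c 3 < c 2 := hstep 2
  have hcases : c 0 = 0 ∨ (c 1 = 0 ∧ 0 < c 0) ∨ (c 2 = 0 ∧ 0 < c 1) ∨ (c 3 = 0 ∧ 0 < c 2) := by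
    omega
  rcases hcases with hc | ⟨hc, hpos⟩ | ⟨hc, hpos⟩ | ⟨hc, hpos⟩
  · exact ⟨1, 2, one_pos, one_lt_two, fun _ _ _ _ => separates_of_corners (L := 0)
      (eq_zero_of_le_of_eq_zero hdec hc) (fun b hb => by omega) (fun b hb => by omega)⟩
  · exact ⟨1, c 0 + 1, one_pos, by omega, fun _ _ _ _ => separates_of_corners (L := c 0)
      (eq_zero_of_le_of_eq_zero hdec hc) (fun b hb => by interval_cases b; omega)
      (fun b hb => by interval_cases b <;> omega)⟩
  · exact ⟨2, 2 * (c 0 - c 1) + 1, two_pos, by omega, fun _ _ _ _ =>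
      separates_of_corners (L := 2 * c 0) (eq_zero_of_le_of_eq_zero hdec hc)
      (fun b hb => by interval_cases b <;> omega) (fun b hb => by interval_cases b <;> omega)⟩
  · exact ⟨4, 5, by norm_num, by norm_num, fun _ _ _ _ =>
      separates_of_corners (L := 11) (eq_zero_of_le_of_eq_zero hdec hc)
      (fun b hb => by interval_cases b <;> omega) (fun b hb => by interval_cases b <;> omega)⟩

end Separation

lemma dotProduct_weight_eq (u v : ℕ) (α : Expo 2) :
    ![1, 1 + u, 1 + v] ⬝ᵥ α = deg α + (u * α 1 + v * α 2) := by
  simp only [dotProduct, deg, Nat.reduceAdd, Fin.sum_univ_three, cons_val_zero, cons_val_one, cons_val, one_mul]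
  ring

theorem small_degree_hilb_segment_general (d : ℕ) (hd6 : d ≤ 6)
    (I : Set (Expo 2)) (hI : IsBorelIdeal I) (hsat : IsSaturatedIdeal I)
    (hp : HasHilbPoly I (Polynomial.C (d : ℚ))) :
    ∃ ord : TermOrder 2, IsSegmentAt ord.lt I d := by
  obtain ⟨hM, hB⟩ := hI
  obtain ⟨N, hcount⟩ := hp.ncard_coIdeal_eq
  have hcol : ∀ b, ∃ a, ![0, a, b] ∈ I := fun b =>
    ⟨N + 1, mem_of_ncard_coIdeal_eq hsat hB hcount rfl (by simp only [deg, Nat.reduceAdd, Fin.sum_univ_three, cons_val_zero, cons_val_one, cons_val]; omega)⟩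
  have hsum : colHeight I 0 + colHeight I 1 + colHeight I 2 + colHeight I 3 ≤ 6 := by
    simpa [Finset.sum_range_succ] using (sum_colHeight_le hsat hB hM hcol hcount 4).trans hd6
  obtain ⟨u, v, hu, huv, hsep⟩ :=
    exists_separating_weights (fun _ => colHeight_succ_lt hB hM hcol) hsum
  have hw : StrictMono ![1, 1 + u, 1 + v] := Fin.strictMono_iff_lt_succ.2 fun i => by
    fin_cases i <;> simp <;> omega
  refine ⟨TermOrder.ofWeight _ one_pos hw, TermOrder.isSegmentAt_ofWeight ?_⟩
  intro τ σ hτ hσ hdτ hdσ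
  rw [hsat.mem_iff hB hM, mem_iff_colHeight_le hM (hcol _)] at hτ hσ
  have := hsep (σ 1) (σ 2) (τ 1) (τ 2) (by simpa using hσ) (by simpa using hτ)
  rw [dotProduct_weight_eq, dotProduct_weight_eq, hdτ, hdσ]
  omega

/-- In `K[x_0,x_1,x_2]`, every saturated Borel ideal with constant Hilbert
polynomial `d ≤ 6` is a hilb-segment ideal with respect to some term order (the Gotzmann
number of the constant polynomial `d` being `d`). -/
theorem small_degree_hilb_segment (d : ℕ) (hd1 : 1 ≤ d) (hd6 : d ≤ 6)
    (I : Set (Expo 2)) (hI : IsBorelIdeal I) (hsat : IsSaturatedIdeal I)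
    (hp : HasHilbPoly I (Polynomial.C (d : ℚ))) :
    ∃ ord : TermOrder 2, IsSegmentAt ord.lt I d :=
  small_degree_hilb_segment_general d hd6 I hI hsat hp
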